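/- Let λ ≠ 1 be an eigenvalue of A_n. Then the vector u ∈ ℂⁿ with u_1 = λ − 1 and u_i = X_i(⌊n/i⌋) for 2 ≤ i ≤ n, where X_i(q) = Σ_{k ≥ 0} v_i(q,k)(λ−1)^{−k}, is nonzero and satisfies A_n u = λ u. -/

import Mathlib

/-- The Dirichlet matrix `D_n` attached to the coefficient sequence `a`. -/
def Dmat (n : ℕ) (a : ℕ → ℂ) : Matrix (Fin n) (Fin n) ℂ :=
  fun i j => if (i.val + 1) ∣ (j.val + 1) then a ((j.val + 1) / (i.val + 1)) else 0

/-- The weight matrix `W_n`: `(i,1)` entry `w i` for `2 ≤ i ≤ n`, other entries `0`. -/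
def Wmat (n : ℕ) (w : ℕ → ℂ) : Matrix (Fin n) (Fin n) ℂ :=
  fun i j => if j.val = 0 ∧ i.val ≠ 0 then w (i.val + 1) else 0

/-- `A_n = W_n + D_n`. -/
def Amat (n : ℕ) (a w : ℕ → ℂ) : Matrix (Fin n) (Fin n) ℂ :=
  Wmat n w + Dmat n a

/-- `dcoef a m k`: the sum of `∏ a ℓᵢ` over `k`-tuples of integers `ℓᵢ ≥ 2`
with product `m`. -/
noncomputable def dcoef (a : ℕ → ℂ) (m k : ℕ) : ℂ :=
  ∑ t ∈ (Fintype.piFinset fun _ : Fin k => Finset.Icc 2 m).filter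
      (fun t => ∏ i, t i = m), ∏ i, a (t i)

/-- `vl a w ℓ m k = ∑_{j=1}^{m} w (j ℓ) * d(j,k)`. -/
noncomputable def vl (a w : ℕ → ℂ) (l m k : ℕ) : ℂ :=
  ∑ j ∈ Finset.Icc 1 m, w (j * l) * dcoef a j k

/-- `X_i(q) = ∑_{k ≥ 0} v_i(q,k) (λ-1)^{-k}`; the sum has finitely many
nonzero terms since `v_i(q,k) = 0` for `k > log₂ q`. -/
noncomputable def Xfun (a w : ℕ → ℂ) (lam : ℂ) (i q : ℕ) : ℂ :=
  ∑' k : ℕ, vl a w i q k * (lam - 1) ^ (-(k : ℤ))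

/-! For an eigenvector `v` of `A_n` for `λ`, row `m ≥ 2` (counted from `1`) reads
`(λ - 1) v_m = w(m) v_1 + ∑_{x ≥ 2, m x ≤ n} a(x) v_{m x}`, because `D_n` is upper triangular
with diagonal `a(1) = 1`. As `λ ≠ 1`, this recursion determines `v_2, …, v_n` from `v_1` by
downward induction on `m`. Peeling the first factor off the tuples counted by `d(j, k + 1)` gives
`vl ℓ q (k + 1) = ∑_{x=2}^{q} a(x) · vl (ℓ x) ⌊q/x⌋ k`, so `m ↦ X_m(⌊n/m⌋)` satisfies the same
recursion with `v_1 = λ - 1`. Hence `u` is a nonzero multiple of `v`. -/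

open Finset

lemma sum_filter_dvd_Icc_one {M : Type*} [AddCommMonoid M] (f : ℕ → M) {d : ℕ} (hd : 0 < d)
    (N : ℕ) : ∑ m ∈ (Icc 1 N).filter (d ∣ ·), f m = ∑ x ∈ Icc 1 (N / d), f (d * x) := by
  have hmultiples : (Icc 1 N).filter (d ∣ ·) = (Icc 1 (N / d)).image (d * ·) := by
    ext m
    simp only [mem_filter, mem_Icc, mem_image, Nat.le_div_iff_mul_le hd]
    constructor
    · rintro ⟨⟨hm, hmN⟩, x, rfl⟩
      exact ⟨x, ⟨Nat.pos_of_mul_pos_left hm, by linarith⟩, rfl⟩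
    · rintro ⟨x, ⟨hx, hxN⟩, rfl⟩
      exact ⟨⟨Nat.mul_pos hd hx, by linarith⟩, dvd_mul_right d x⟩
  rw [hmultiples, sum_image fun x _ y _ h => Nat.eq_of_mul_eq_mul_left hd h]

section Dcoef

variable (a : ℕ → ℂ)

lemma mem_dcoef_tuples_iff {m k : ℕ} {t : Fin k → ℕ} :
    t ∈ (Fintype.piFinset fun _ : Fin k => Icc 2 m).filter (fun t => ∏ i, t i = m) ↔
      (∀ i, 2 ≤ t i) ∧ ∏ i, t i = m := by
  simp only [mem_filter, Fintype.mem_piFinset, mem_Icc]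
  refine ⟨fun h => ⟨fun i => (h.1 i).1, h.2⟩, fun ⟨ht, hprod⟩ => ⟨fun i => ⟨ht i, ?_⟩, hprod⟩⟩
  have hpos : 0 < m := hprod ▸ prod_pos fun j _ => by linarith [ht j]
  exact Nat.le_of_dvd hpos (hprod ▸ dvd_prod_of_mem t (mem_univ i))

lemma dcoef_zero (m : ℕ) : dcoef a m 0 = if m = 1 then 1 else 0 := by
  rw [dcoef]
  split_ifs with h <;> simp [h, eq_comm]

lemma dcoef_eq_zero_of_lt {m k : ℕ} (h : m < 2 ^ k) : dcoef a m k = 0 := by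
  refine sum_eq_zero fun t ht => absurd h (not_lt.2 ?_)
  obtain ⟨htwo, rfl⟩ := mem_dcoef_tuples_iff.1 ht
  simpa using prod_le_prod' fun i (_ : i ∈ univ) => htwo i

lemma dcoef_succ (m k : ℕ) :
    dcoef a m (k + 1) = ∑ l ∈ m.divisors.erase 1, a l * dcoef a (m / l) k := by
  simp only [dcoef, mul_sum]
  rw [sum_sigma']
  refine sum_nbij' (fun t => ⟨t 0, Fin.tail t⟩) (fun p => Fin.cons p.1 p.2) ?_ ?_
    (fun t _ => Fin.cons_self_tail t) (fun p _ => by simp) (fun t _ => by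
      simp [Fin.prod_univ_succ, Fin.tail])
  · intro t ht
    obtain ⟨ht, hprod⟩ := mem_dcoef_tuples_iff.1 ht
    rw [Fin.prod_univ_succ] at hprod
    have h0 : 0 < t 0 := by linarith [ht 0]
    simp only [mem_sigma, mem_erase, Nat.mem_divisors, mem_dcoef_tuples_iff, ← hprod,
      Nat.mul_div_cancel_left _ h0]
    refine ⟨⟨by linarith [ht 0], dvd_mul_right _ _, ?_⟩, fun i => ht i.succ, rfl⟩
    exact Nat.mul_ne_zero h0.ne' (prod_pos fun j _ => by linarith [ht j.succ]).ne'
  · rintro ⟨l, s⟩ hp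
    simp only [mem_sigma, mem_erase, Nat.mem_divisors, mem_dcoef_tuples_iff] at hp
    obtain ⟨⟨hl1, hlm, hm⟩, hs, hprod⟩ := hp
    have hl0 : l ≠ 0 := by rintro rfl; exact hm (zero_dvd_iff.1 hlm)
    refine mem_dcoef_tuples_iff.2 ⟨fun i => Fin.cases (show 2 ≤ l by omega) hs i, ?_⟩
    simp [Fin.prod_univ_succ, hprod, Nat.mul_div_cancel' hlm]

end Dcoef

section Vl

variable (a w : ℕ → ℂ)

lemma vl_zero (l : ℕ) {q : ℕ} (hq : 1 ≤ q) : vl a w l q 0 = w l := by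
  rw [vl, sum_eq_single_of_mem 1 (mem_Icc.2 ⟨le_rfl, hq⟩) fun j _ hj => by simp [dcoef_zero, hj]]
  simp [dcoef_zero]

lemma vl_eq_zero_of_lt (l : ℕ) {q k : ℕ} (h : q < 2 ^ k) : vl a w l q k = 0 :=
  sum_eq_zero fun j hj => by
    rw [dcoef_eq_zero_of_lt a ((mem_Icc.1 hj).2.trans_lt h), mul_zero]

lemma vl_succ (l q k : ℕ) :
    vl a w l q (k + 1) = ∑ x ∈ Icc 2 q, a x * vl a w (l * x) (q / x) k := by
  simp only [vl, dcoef_succ, mul_sum]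
  rw [sum_comm' (t' := Icc 2 q) (s' := fun x => (Icc 1 q).filter (x ∣ ·))]
  · refine sum_congr rfl fun x hx => ?_
    have hx0 : 0 < x := by linarith [(mem_Icc.1 hx).1]
    rw [sum_filter_dvd_Icc_one _ hx0]
    refine sum_congr rfl fun y _ => ?_
    rw [Nat.mul_div_cancel_left y hx0, show x * y * l = y * (l * x) by ring]
    ring
  · intro j x
    simp only [mem_Icc, mem_erase, Nat.mem_divisors, mem_filter]
    constructor
    · rintro ⟨⟨hj, hjq⟩, hx1, hxj, -⟩
      have := Nat.le_of_dvd hj hxj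
      have := Nat.pos_of_dvd_of_pos hxj hj
      exact ⟨⟨⟨hj, hjq⟩, hxj⟩, by omega, by omega⟩
    · rintro ⟨⟨⟨hj, hjq⟩, hxj⟩, hx2, -⟩
      exact ⟨⟨hj, hjq⟩, by omega, hxj, by omega⟩

end Vl

section Xfun

variable (a w : ℕ → ℂ)

lemma Xfun_eq_sum_range (lam : ℂ) (l : ℕ) {q N : ℕ} (h : q ≤ N) :
    Xfun a w lam l q = ∑ k ∈ range (N + 1), vl a w l q k * (lam - 1)⁻¹ ^ k := by
  rw [Xfun, tsum_eq_sum (s := range (N + 1)) fun k hk => ?_]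
  · simp [zpow_neg, inv_pow]
  · have : q < 2 ^ k := by
      have := Nat.lt_two_pow_self (n := k)
      simp only [mem_range, not_lt] at hk
      omega
    rw [vl_eq_zero_of_lt a w l this, zero_mul]

lemma sub_one_mul_Xfun {lam : ℂ} (hlam : lam ≠ 1) (m : ℕ) {q : ℕ} (hq : 1 ≤ q) :
    (lam - 1) * Xfun a w lam m q =
      w m * (lam - 1) + ∑ x ∈ Icc 2 q, a x * Xfun a w lam (m * x) (q / x) := by
  have hy : lam - 1 ≠ 0 := sub_ne_zero.2 hlam
  have htail : ∀ x ∈ Icc 2 q, Xfun a w lam (m * x) (q / x) =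
      ∑ k ∈ range (q + 1), vl a w (m * x) (q / x) k * (lam - 1)⁻¹ ^ k :=
    fun x _ => Xfun_eq_sum_range a w lam _ (Nat.div_le_self q x)
  rw [Xfun_eq_sum_range a w lam m (Nat.le_succ q), sum_range_succ', mul_add, mul_sum,
    sum_congr rfl fun x hx => congrArg (a x * ·) (htail x hx)]
  simp only [vl_zero a w m hq, vl_succ, pow_zero, mul_one, mul_sum, sum_mul]
  rw [add_comm, mul_comm, sum_comm]
  congr 1
  refine sum_congr rfl fun k _ => sum_congr rfl fun x _ => ?_
  rw [pow_succ]
  field_simp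

lemma sub_one_mul_Xfun_div {lam : ℂ} (hlam : lam ≠ 1) {m n : ℕ} (hm : 1 ≤ m) (hmn : m ≤ n) :
    (lam - 1) * Xfun a w lam m (n / m) =
      w m * (lam - 1) + ∑ x ∈ Icc 2 (n / m), a x * Xfun a w lam (m * x) (n / (m * x)) := by
  simp only [sub_one_mul_Xfun a w hlam m ((Nat.one_le_div_iff hm).2 hmn), Nat.div_div_eq_div_mul]

end Xfun

def oneIndexed {α : Type*} [Zero α] {n : ℕ} (v : Fin n → α) (m : ℕ) : α :=
  if h : 0 < m ∧ m ≤ n then v ⟨m - 1, by omega⟩ else 0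

@[simp]
lemma oneIndexed_val_add_one {α : Type*} [Zero α] {n : ℕ} (v : Fin n → α) (j : Fin n) :
    oneIndexed v (j.val + 1) = v j := by
  simp [oneIndexed, Nat.succ_le_of_lt j.isLt]

lemma sum_fin_eq_sum_Icc {M : Type*} [AddCommMonoid M] (n : ℕ) (f : ℕ → M) :
    ∑ j : Fin n, f (j.val + 1) = ∑ m ∈ Icc 1 n, f m := by
  rw [Fin.sum_univ_eq_sum_range (fun j => f (j + 1)), range_eq_Ico, sum_Ico_add']
  rfl

section Matrix

open Matrix

variable {n : ℕ} (a w : ℕ → ℂ) (v : Fin n → ℂ)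

lemma Dmat_mulVec_apply (i : Fin n) :
    (Dmat n a *ᵥ v) i =
      ∑ x ∈ Icc 1 (n / (i.val + 1)), a x * oneIndexed v ((i.val + 1) * x) := by
  have hi : 0 < i.val + 1 := i.val.succ_pos
  simp only [Matrix.mulVec, dotProduct, Dmat, ← oneIndexed_val_add_one v]
  rw [sum_fin_eq_sum_Icc n fun m =>
      (if i.val + 1 ∣ m then a (m / (i.val + 1)) else 0) * oneIndexed v m]
  simp only [ite_mul, zero_mul, ← sum_filter, sum_filter_dvd_Icc_one _ hi,
    Nat.mul_div_cancel_left _ hi]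

lemma Wmat_mulVec_apply (i : Fin n) :
    (Wmat n w *ᵥ v) i = if i.val = 0 then 0 else w (i.val + 1) * oneIndexed v 1 := by
  have hn : 0 < n := i.pos
  split_ifs with hi
  · simp [Matrix.mulVec, dotProduct, Wmat, hi]
  · rw [Matrix.mulVec, dotProduct, sum_eq_single ⟨0, hn⟩]
    · simp [Wmat, hi, oneIndexed, hn.ne']
    · intro j _ hj
      simp [Wmat, Fin.ext_iff.not.1 hj]
    · simp

lemma sub_one_mul_oneIndexed_of_mulVec_eq (ha : a 1 = 1) {lam : ℂ}
    (hv : Amat n a w *ᵥ v = lam • v) {m : ℕ} (hm : 2 ≤ m) (hmn : m ≤ n) :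
    (lam - 1) * oneIndexed v m =
      w m * oneIndexed v 1 + ∑ x ∈ Icc 2 (n / m), a x * oneIndexed v (m * x) := by
  have hrow := congrFun hv ⟨m - 1, by omega⟩
  have hm1 : m - 1 + 1 = m := by omega
  have hq : 1 ≤ n / m := (Nat.one_le_div_iff (by omega)).2 hmn
  simp only [Amat, Matrix.add_mulVec, Pi.add_apply, Wmat_mulVec_apply, Dmat_mulVec_apply,
    Pi.smul_apply, smul_eq_mul, hm1, ← insert_Icc_add_one_left_eq_Icc hq] at hrow
  rw [if_neg (by omega), sum_insert (by simp), ha, one_mul, mul_one,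
    ← oneIndexed_val_add_one v, hm1] at hrow
  linear_combination -hrow

lemma Matrix.exists_mulVec_eq_smul_of_mem_spectrum {K ι : Type*} [Field K] [Fintype ι]
    [DecidableEq ι] {A : Matrix ι ι K} {μ : K} (h : μ ∈ spectrum K A) :
    ∃ v : ι → K, v ≠ 0 ∧ A *ᵥ v = μ • v := by
  rw [← Matrix.spectrum_toLin', ← Module.End.hasEigenvalue_iff_mem_spectrum] at h
  obtain ⟨v, hv, hv0⟩ := h.exists_hasEigenvector
  exact ⟨v, hv0, by simpa using Module.End.mem_eigenspace_iff.1 hv⟩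

end Matrix

lemma eq_of_recursion_Icc {K : Type*} [Field K] {c : K} (hc : c ≠ 0) {n : ℕ} {a b f g : ℕ → K}
    (hf : ∀ m, 2 ≤ m → m ≤ n → c * f m = b m + ∑ x ∈ Icc 2 (n / m), a x * f (m * x))
    (hg : ∀ m, 2 ≤ m → m ≤ n → c * g m = b m + ∑ x ∈ Icc 2 (n / m), a x * g (m * x))
    {m : ℕ} (hm : 2 ≤ m) (hmn : m ≤ n) : f m = g m := by
  induction hd : n - m using Nat.strong_induction_on generalizing m with
  | _ d ih =>
    refine mul_left_cancel₀ hc ?_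
    rw [hf m hm hmn, hg m hm hmn]
    refine congrArg (b m + ·) (sum_congr rfl fun x hx => ?_)
    have hx2 : 2 ≤ x := (mem_Icc.1 hx).1
    have hmx : m * x ≤ n := mul_comm x m ▸ (Nat.le_div_iff_mul_le (by omega)).1 (mem_Icc.1 hx).2
    have hlt : m < m * x := by nlinarith
    rw [ih (n - m * x) (by omega) (by omega) hmx rfl]

theorem eigenvector_Amat_general (n : ℕ) (a w : ℕ → ℂ) (ha : a 1 = 1)
    (lam : ℂ) (hlam : lam ≠ 1) (heig : lam ∈ spectrum ℂ (Amat n a w)) :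
    (fun i : Fin n => if i.val = 0 then lam - 1
        else Xfun a w lam (i.val + 1) (n / (i.val + 1))) ≠ 0 ∧
    (Amat n a w).mulVec (fun i : Fin n => if i.val = 0 then lam - 1
        else Xfun a w lam (i.val + 1) (n / (i.val + 1))) =
      lam • (fun i : Fin n => if i.val = 0 then lam - 1
        else Xfun a w lam (i.val + 1) (n / (i.val + 1))) := by
  set u : Fin n → ℂ := fun i => if i.val = 0 then lam - 1
    else Xfun a w lam (i.val + 1) (n / (i.val + 1))
  obtain ⟨v, hv0, hv⟩ := Matrix.exists_mulVec_eq_smul_of_mem_spectrum heig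
  have hy : lam - 1 ≠ 0 := sub_ne_zero.2 hlam
  set c := oneIndexed v 1 / (lam - 1)
  have hc1 : c * (lam - 1) = oneIndexed v 1 := div_mul_cancel₀ _ hy
  have hvX : ∀ m, 2 ≤ m → m ≤ n → oneIndexed v m = c * Xfun a w lam m (n / m) :=
    fun _ hm hmn => eq_of_recursion_Icc (g := fun m => c * Xfun a w lam m (n / m)) hy
      (fun _ hm hmn => sub_one_mul_oneIndexed_of_mulVec_eq a w v ha hv hm hmn)
      (fun m hm hmn => by
        rw [mul_left_comm, sub_one_mul_Xfun_div a w hlam (by omega) hmn, mul_add, mul_sum,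
          mul_left_comm c (w m), hc1]
        simp only [mul_left_comm c])
      hm hmn
  have hvu : v = c • u := by
    ext i
    by_cases hi : i.val = 0
    · simp [u, hi, hc1, ← oneIndexed_val_add_one v i]
    · simpa [u, hi] using hvX (i.val + 1) (by omega) i.isLt
  have hc : c ≠ 0 := by
    rintro hc
    exact hv0 (by rw [hvu, hc, zero_smul])
  have huv : u = c⁻¹ • v := by rw [hvu, smul_smul, inv_mul_cancel₀ hc, one_smul]
  exact ⟨huv ▸ smul_ne_zero (inv_ne_zero hc) hv0,
    by rw [huv, Matrix.mulVec_smul, hv, smul_comm]⟩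

/-- If `λ ≠ 1` is an eigenvalue of `A_n`, then the vector `u` with `u₁ = λ - 1` and
`uᵢ = Xᵢ(⌊n/i⌋)` for `2 ≤ i ≤ n` is nonzero and satisfies `A_n u = λ u`. -/
theorem eigenvector_Amat (n : ℕ) (hn : 2 ≤ n) (a w : ℕ → ℂ) (ha : a 1 = 1) (hw : w 1 = 1)
    (lam : ℂ) (hlam : lam ≠ 1) (heig : lam ∈ spectrum ℂ (Amat n a w)) :
    (fun i : Fin n => if i.val = 0 then lam - 1
        else Xfun a w lam (i.val + 1) (n / (i.val + 1))) ≠ 0 ∧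
    (Amat n a w).mulVec (fun i : Fin n => if i.val = 0 then lam - 1
        else Xfun a w lam (i.val + 1) (n / (i.val + 1))) =
      lam • (fun i : Fin n => if i.val = 0 then lam - 1
        else Xfun a w lam (i.val + 1) (n / (i.val + 1))) :=
  eigenvector_Amat_general n a w ha lam hlam heig
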